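/- arXiv:2005.09719 — 4 statements merged into one kernel-verified Lean document; each statement's English description precedes it below -/
import Mathlib

section
/- Let Γ be a finite simple graph with no cycles (a forest), let H be a finite nonempty partially ordered set, and let σ : H → V(Γ) be a map such that: (a) whenever x ⋖ x′ is a covering relation in H, the vertices σ(x) and σ(x′) are adjacent in Γ; and (b) whenever σ(x) = σ(x′) or σ(x) and σ(x′) are adjacent in Γ, the elements x and x′ are comparable in H. Then there exists x ∈ H with 1/3 ≤ di(x;H) ≤ 2/3. (This is the combinatorial content of the paper's Theorem on fully commutative intervals: applied to the heap H_w of a nonidentity fully commutative element w of a Coxeter group with acyclic Coxeter diagram, with its labeling by simple generators, it yields b([id,w]_L) = bi(H_w) ≥ 1/3.) -/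
/-!
Suppose no element has `di` in `[1/3, 2/3]` and let `A` be the set of elements with `di > 2/3`.
Deleting a maximal element from a lower set, or adding a minimal one, injects lower sets
containing an element into those avoiding it and vice versa; this shows that `A` is a lower set
without maximal elements, that its complement has no minimal elements, and that a cover `a ⋖ b`
from `A` to its complement is neither the only upper cover of `a` nor the only lower cover of `b`.

For vertices `u, v`, induction on the branch of `u` away from `v` in the forest then shows that
every element of `A` labelled `u` lies below an element of `A` labelled `v`, and dually for the
complement. Indeed, an upper cover of such an element is labelled by a neighbour of `u`: if that
is `v` and the cover lies outside `A`, there is a second upper cover, which is incomparable with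
the first and hence not labelled `v`; a cover labelled by a neighbour `m ≠ v` lies in `A` and
below a larger element of `A` labelled `u`, by the induction hypothesis for `m, u`. Taking
`u = v` shows that `A` and its complement are empty.
-/

/-- `di(x;H)`: the fraction of order ideals (lower sets) of the poset `H` that contain
the element `x`. -/
noncomputable def di (H : Type*) [PartialOrder H] (x : H) : ℝ :=
  (Nat.card {I : Set H // IsLowerSet I ∧ x ∈ I} : ℝ) /
    (Nat.card {I : Set H // IsLowerSet I} : ℝ)

open OrderDual

section Covers

variable {H : Type*} [PartialOrder H]

theorem CovBy.not_le_of_covBy {a b c : H} (hab : a ⋖ b) (hac : a ⋖ c) (hbc : b ≠ c) : ¬ b ≤ c :=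
  fun h => hac.2 hab.lt (h.lt_of_ne hbc)

theorem exists_covBy_of_not_isMax [WellFoundedLT H] {a : H} (ha : ¬ IsMax a) : ∃ b, a ⋖ b :=
  let ⟨_, hab⟩ := not_isMax_iff.mp ha
  let ⟨b, hb, _⟩ := exists_covBy_le_of_lt hab
  ⟨b, hb⟩

theorem exists_covBy_of_not_isMin [WellFoundedGT H] {b : H} (hb : ¬ IsMin b) : ∃ a, a ⋖ b :=
  let ⟨_, hab⟩ := not_isMin_iff.mp hb
  let ⟨a, _, ha⟩ := exists_le_covBy_of_lt hab
  ⟨a, ha⟩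

end Covers

section LowerSetCount

variable {H : Type*} [PartialOrder H]

noncomputable def numLowerSets (H : Type*) [PartialOrder H] : ℕ := {I : Set H | IsLowerSet I}.ncard

noncomputable def numLowerSetsMem (x : H) : ℕ := {I : Set H | IsLowerSet I ∧ x ∈ I}.ncard

noncomputable def numLowerSetsNotMem (x : H) : ℕ := {I : Set H | IsLowerSet I ∧ x ∉ I}.ncard

theorem di_eq_div (x : H) : di H x = numLowerSetsMem x / numLowerSets H := rfl

variable [Finite H]

theorem numLowerSets_pos : 0 < numLowerSets H :=
  (Set.ncard_pos (Set.toFinite _)).mpr ⟨∅, isLowerSet_empty⟩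

theorem numLowerSetsMem_add_numLowerSetsNotMem (x : H) :
    numLowerSetsMem x + numLowerSetsNotMem x = numLowerSets H :=
  Set.ncard_inter_add_ncard_sdiff_eq_ncard {I : Set H | IsLowerSet I} {I | x ∈ I}

theorem numLowerSetsMem_antitone : Antitone (numLowerSetsMem (H := H)) := fun _ _ hab =>
  Set.ncard_le_ncard fun _ hI => ⟨hI.1, hI.1 hab hI.2⟩

theorem numLowerSetsMem_add_ncard_mem_notMem {a b : H} (hab : a ≤ b) :
    numLowerSetsMem b + {I : Set H | IsLowerSet I ∧ a ∈ I ∧ b ∉ I}.ncard = numLowerSetsMem a := by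
  unfold numLowerSetsMem
  rw [← Set.ncard_inter_add_ncard_sdiff_eq_ncard {I : Set H | IsLowerSet I ∧ a ∈ I} {I | b ∈ I}]
  congr 2 <;> ext I
  · exact ⟨fun h => ⟨⟨h.1, h.1 hab h.2⟩, h.2⟩, fun h => ⟨h.1.1, h.2⟩⟩
  · exact and_assoc.symm

theorem ncard_le_numLowerSetsNotMem {a : H} {S : Set (Set H)}
    (hS : ∀ I ∈ S, IsLowerSet I ∧ a ∈ I ∧ ∀ b ∈ I, a ≤ b → b = a) :
    S.ncard ≤ numLowerSetsNotMem a := by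
  refine Set.ncard_le_ncard_of_injOn (· \ {a})
    (fun I hI => ⟨(hS I hI).1.erase (hS I hI).2.2, fun h => h.2 rfl⟩) fun I hI J hJ hIJ => ?_
  rw [← Set.insert_sdiff_self_of_mem (hS I hI).2.1, ← Set.insert_sdiff_self_of_mem (hS J hJ).2.1]
  exact congrArg (insert a) hIJ

theorem ncard_le_numLowerSetsMem {b : H} {S : Set (Set H)}
    (hS : ∀ I ∈ S, IsLowerSet I ∧ b ∉ I ∧ ∀ y < b, y ∈ I) :
    S.ncard ≤ numLowerSetsMem b := by
  refine Set.ncard_le_ncard_of_injOn (insert b) (fun I hI => ⟨?_, Set.mem_insert b I⟩)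
    fun I hI J hJ hIJ => ?_
  · obtain ⟨hI, -, hbelow⟩ := hS I hI
    rintro y z hzy (rfl | hy)
    · rcases hzy.lt_or_eq with hz | rfl
      exacts [.inr (hbelow z hz), .inl rfl]
    · exact .inr (hI hzy hy)
  · rw [← Set.insert_sdiff_self_of_notMem (hS I hI).2.1,
      ← Set.insert_sdiff_self_of_notMem (hS J hJ).2.1]
    exact congrArg (· \ {b}) hIJ

theorem two_mul_numLowerSetsMem_le_of_isMax {a : H} (ha : IsMax a) :
    2 * numLowerSetsMem a ≤ numLowerSets H := by
  have h₁ : numLowerSetsMem a ≤ _ :=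
    ncard_le_numLowerSetsNotMem fun I hI => ⟨hI.1, hI.2, fun _ _ hab => (ha hab).antisymm hab⟩
  have h₂ := numLowerSetsMem_add_numLowerSetsNotMem a
  omega

theorem numLowerSets_le_two_mul_of_isMin {a : H} (ha : IsMin a) :
    numLowerSets H ≤ 2 * numLowerSetsMem a := by
  have h₁ : numLowerSetsNotMem a ≤ _ :=
    ncard_le_numLowerSetsMem fun I hI => ⟨hI.1, hI.2, fun _ hy => (ha.not_lt hy).elim⟩
  have h₂ := numLowerSetsMem_add_numLowerSetsNotMem a
  omega

theorem two_mul_numLowerSetsMem_le_of_covBy {a b : H} (hab : a ⋖ b) (hb : ∀ c, a ⋖ c → c = b) :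
    2 * numLowerSetsMem a ≤ numLowerSets H + numLowerSetsMem b := by
  have h₁ := ncard_le_numLowerSetsNotMem
    (S := {I : Set H | IsLowerSet I ∧ a ∈ I ∧ b ∉ I}) fun I ⟨hI, haI, hbI⟩ => by
      refine ⟨hI, haI, fun y hy hay => (hay.lt_or_eq.resolve_left fun hlt => ?_).symm⟩
      obtain ⟨c, hac, hcy⟩ := exists_covBy_le_of_lt hlt
      exact hbI (hI (hb c hac ▸ hcy) hy)
  have h₂ := numLowerSetsMem_add_ncard_mem_notMem hab.le
  have h₃ := numLowerSetsMem_add_numLowerSetsNotMem a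
  omega

theorem numLowerSetsMem_le_two_mul_of_covBy {a b : H} (hab : a ⋖ b) (ha : ∀ c, c ⋖ b → c = a) :
    numLowerSetsMem a ≤ 2 * numLowerSetsMem b := by
  have h₁ := ncard_le_numLowerSetsMem
    (S := {I : Set H | IsLowerSet I ∧ a ∈ I ∧ b ∉ I}) fun I ⟨hI, haI, hbI⟩ => by
      refine ⟨hI, hbI, fun y hyb => ?_⟩
      obtain ⟨c, hyc, hcb⟩ := exists_le_covBy_of_lt hyb
      exact hI (ha c hcb ▸ hyc) haI
  have h₂ := numLowerSetsMem_add_ncard_mem_notMem hab.le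
  omega

theorem one_third_le_di_and_di_le_iff (x : H) :
    (1 / 3 ≤ di H x ∧ di H x ≤ 2 / 3) ↔
      numLowerSets H ≤ 3 * numLowerSetsMem x ∧ 3 * numLowerSetsMem x ≤ 2 * numLowerSets H := by
  have hN : (0 : ℝ) < numLowerSets H := by exact_mod_cast numLowerSets_pos
  rw [di_eq_div, le_div_iff₀ hN, div_le_iff₀ hN]
  simp only [← Nat.cast_le (α := ℝ), Nat.cast_mul, Nat.cast_ofNat]
  constructor <;> rintro ⟨h₁, h₂⟩ <;> constructor <;> linarith

end LowerSetCount

namespace SimpleGraph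

variable {V : Type*} {Γ : SimpleGraph V}

def branch (Γ : SimpleGraph V) (u v : V) : Set V :=
  {w | (Γ.deleteEdges {s(u, v)}).Reachable u w}

theorem IsAcyclic.branch_ssubset (hΓ : Γ.IsAcyclic) {m u v : V} (hmu : Γ.Adj m u) (hmv : m ≠ v) :
    Γ.branch m u ⊂ Γ.branch u v := by
  have hbridge : ¬ (Γ.deleteEdges {s(m, u)}).Reachable m u :=
    isAcyclic_iff_forall_adj_isBridge.mp hΓ hmu
  refine ⟨fun y ⟨p⟩ => ?_, fun hsub => hbridge (hsub (Reachable.refl u))⟩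
  classical
  have hu : u ∉ p.support := fun hu => hbridge ⟨p.takeUntil u hu⟩
  have hp : ∀ e ∈ p.edges, e ∈ (Γ.deleteEdges {s(u, v)}).edgeSet := by
    intro e he
    have he' := p.edges_subset_edgeSet he
    rw [edgeSet_deleteEdges] at he' ⊢
    refine ⟨he'.1, ?_⟩
    rintro rfl
    exact hu (p.fst_mem_support_of_mem_edges he)
  have hum : (Γ.deleteEdges {s(u, v)}).Adj u m := by
    simp [hmu.symm, hmv, hmu.ne]
  exact ⟨.cons hum (p.transfer _ hp)⟩

end SimpleGraph

section GapCut

variable {H : Type*} [PartialOrder H]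

structure IsGapCut (A : Set H) : Prop where
  isLowerSet : IsLowerSet A
  exists_upperCover : ∀ a ∈ A, ∃ b, a ⋖ b
  exists_lowerCover : ∀ b ∉ A, ∃ a, a ⋖ b
  exists_other_upperCover : ∀ a b, a ∈ A → b ∉ A → a ⋖ b → ∃ w, a ⋖ w ∧ w ≠ b
  exists_other_lowerCover : ∀ a b, a ∈ A → b ∉ A → a ⋖ b → ∃ z, z ⋖ b ∧ z ≠ a

theorem isGapCut_of_forall [Finite H] (h : ∀ x : H,
    3 * numLowerSetsMem x < numLowerSets H ∨ 2 * numLowerSets H < 3 * numLowerSetsMem x) :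
    IsGapCut {x : H | 2 * numLowerSets H < 3 * numLowerSetsMem x} where
  isLowerSet a b hba ha := by
    have := numLowerSetsMem_antitone hba
    simp only [Set.mem_ofPred_eq] at ha ⊢
    omega
  exists_upperCover a ha := exists_covBy_of_not_isMax fun hmax => by
    have := two_mul_numLowerSetsMem_le_of_isMax hmax
    simp only [Set.mem_ofPred_eq] at ha
    omega
  exists_lowerCover b hb := exists_covBy_of_not_isMin fun hmin => by
    have := numLowerSets_le_two_mul_of_isMin hmin
    have := h b
    simp only [Set.mem_ofPred_eq] at hb
    omega
  exists_other_upperCover a b ha hb hab := by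
    by_contra! hother
    have := two_mul_numLowerSetsMem_le_of_covBy hab hother
    have := h b
    simp only [Set.mem_ofPred_eq] at ha hb
    omega
  exists_other_lowerCover a b ha hb hab := by
    by_contra! hother
    have := numLowerSetsMem_le_two_mul_of_covBy hab hother
    have := h b
    simp only [Set.mem_ofPred_eq] at ha hb
    omega

theorem IsGapCut.dual {A : Set H} (hA : IsGapCut A) : IsGapCut (ofDual ⁻¹' Aᶜ : Set Hᵒᵈ) where
  isLowerSet := hA.isLowerSet.compl.toDual
  exists_upperCover b hb := by
    obtain ⟨a, hab⟩ := hA.exists_lowerCover (ofDual b) hb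
    exact ⟨toDual a, hab.toDual⟩
  exists_lowerCover a ha := by
    obtain ⟨b, hab⟩ := hA.exists_upperCover (ofDual a) (not_not.mp ha)
    exact ⟨toDual b, hab.toDual⟩
  exists_other_upperCover b a hb ha hba := by
    obtain ⟨z, hza, hzb⟩ := hA.exists_other_lowerCover (ofDual a) (ofDual b) (not_not.mp ha) hb
      hba.ofDual
    exact ⟨toDual z, hza.toDual, hzb⟩
  exists_other_lowerCover b a hb ha hba := by
    obtain ⟨w, hbw, hwa⟩ := hA.exists_other_upperCover (ofDual a) (ofDual b) (not_not.mp ha) hb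
      hba.ofDual
    exact ⟨toDual w, hbw.toDual, hwa⟩

variable {V : Type*} {Γ : SimpleGraph V} {σ : H → V} {A : Set H} {u v : V}

structure IsHeapLabelling (Γ : SimpleGraph V) (σ : H → V) : Prop where
  adj_of_covBy : ∀ ⦃x y : H⦄, x ⋖ y → Γ.Adj (σ x) (σ y)
  le_or_le : ∀ x y : H, σ x = σ y ∨ Γ.Adj (σ x) (σ y) → x ≤ y ∨ y ≤ x

theorem IsHeapLabelling.dual (hσ : IsHeapLabelling Γ σ) :
    IsHeapLabelling Γ (σ ∘ ofDual) where
  adj_of_covBy _ _ hxy := (hσ.adj_of_covBy hxy.ofDual).symm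
  le_or_le x y hxy := (hσ.le_or_le (ofDual x) (ofDual y) hxy).symm

def ClimbsTo (σ : H → V) (A : Set H) (u v : V) : Prop :=
  ∀ x ∈ A, σ x = u → ∃ y ∈ A, σ y = v ∧ x < y

/-- The second conjunct, read in `H`: every element outside `A` labelled `u` lies above an
element outside `A` labelled `v`. -/
def SidesClimbTo (σ : H → V) (A : Set H) (u v : V) : Prop :=
  ClimbsTo σ A u v ∧ ClimbsTo (σ ∘ ofDual) (ofDual ⁻¹' Aᶜ : Set Hᵒᵈ) u v

theorem SidesClimbTo.dual (h : SidesClimbTo σ A u v) :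
    SidesClimbTo (σ ∘ ofDual) (ofDual ⁻¹' Aᶜ : Set Hᵒᵈ) u v := by
  refine ⟨h.2, fun x hx hxu => ?_⟩
  obtain ⟨y, hy, hyv, hxy⟩ := h.1 x (not_not.mp hx) hxu
  exact ⟨y, not_not.mpr hy, hyv, hxy⟩

theorem SidesClimbTo.mem_of_covBy {m : V} (hσ : IsHeapLabelling Γ σ)
    (hA : IsLowerSet A) (h : SidesClimbTo σ A m u) {x y : H} (hx : x ∈ A) (hxu : σ x = u)
    (hxy : x ⋖ y) (hym : σ y = m) : y ∈ A := by
  by_contra hy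
  obtain ⟨z, hz, hzu, hzy⟩ := h.2 y hy hym
  rcases hσ.le_or_le x z (.inl (hxu.trans hzu.symm)) with hxz | hzx
  · exact hxy.2 (hxz.lt_of_ne (by rintro rfl; exact hz hx)) hzy
  · exact hz (hA hzx hx)

theorem climbsTo_of_forall_sidesClimbTo [Finite H] (hσ : IsHeapLabelling Γ σ) (hA : IsGapCut A)
    (h : ∀ m, Γ.Adj m u → m ≠ v → SidesClimbTo σ A m u) : ClimbsTo σ A u v := by
  intro x
  induction x using WellFoundedGT.induction with
  | _ x ih =>
  intro hx hxu
  obtain ⟨β, hxβ⟩ := hA.exists_upperCover x hx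
  have hcover : (β ∈ A ∧ σ β = v) ∨ ∃ w, x ⋖ w ∧ σ w ≠ v := by
    by_cases hβv : σ β = v
    · by_cases hβ : β ∈ A
      · exact .inl ⟨hβ, hβv⟩
      obtain ⟨w, hxw, hwβ⟩ := hA.exists_other_upperCover x β hx hβ hxβ
      refine .inr ⟨w, hxw, fun hwv => ?_⟩
      rcases hσ.le_or_le w β (.inl (hwv.trans hβv.symm)) with hle | hle
      · exact hxw.not_le_of_covBy hxβ hwβ hle
      · exact hxβ.not_le_of_covBy hxw hwβ.symm hle
    · exact .inr ⟨β, hxβ, hβv⟩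
  rcases hcover with ⟨hβ, hβv⟩ | ⟨w, hxw, hwv⟩
  · exact ⟨β, hβ, hβv, hxβ.lt⟩
  have hwu : Γ.Adj (σ w) u := hxu ▸ (hσ.adj_of_covBy hxw).symm
  have hw : w ∈ A := (h _ hwu hwv).mem_of_covBy hσ hA.isLowerSet hx hxu hxw rfl
  obtain ⟨γ, hγ, hγu, hwγ⟩ := (h _ hwu hwv).1 w hw rfl
  obtain ⟨y, hy, hyv, hγy⟩ := ih γ (hxw.lt.trans hwγ) hγ hγu
  exact ⟨y, hy, hyv, hxw.lt.trans (hwγ.trans hγy)⟩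

theorem sidesClimbTo_of_forall_sidesClimbTo [Finite H] (hσ : IsHeapLabelling Γ σ) (hA : IsGapCut A)
    (h : ∀ m, Γ.Adj m u → m ≠ v → SidesClimbTo σ A m u) : SidesClimbTo σ A u v :=
  ⟨climbsTo_of_forall_sidesClimbTo hσ hA h,
    climbsTo_of_forall_sidesClimbTo hσ.dual hA.dual fun m hmu hmv => (h m hmu hmv).dual⟩

theorem SimpleGraph.IsAcyclic.sidesClimbTo [Finite V] [Finite H] (hΓ : Γ.IsAcyclic) (hσ : IsHeapLabelling Γ σ) (hA : IsGapCut A) (u v : V) :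
    SidesClimbTo σ A u v :=
  sidesClimbTo_of_forall_sidesClimbTo hσ hA fun m _ _ => hΓ.sidesClimbTo hσ hA m u
termination_by (Γ.branch u v).ncard
decreasing_by exact Set.ncard_lt_ncard (hΓ.branch_ssubset ‹_› ‹_›)

theorem IsGapCut.eq_empty [Finite V] [Finite H] (hΓ : Γ.IsAcyclic)
    (hσ : IsHeapLabelling Γ σ) (hA : IsGapCut A) : A = ∅ := by
  refine Set.eq_empty_of_forall_notMem fun x => ?_
  induction x using WellFoundedGT.induction with
  | _ x ih =>
  intro hx
  obtain ⟨y, hy, -, hxy⟩ := (hΓ.sidesClimbTo hσ hA (σ x) (σ x)).1 x hx rfl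
  exact ih y hxy hy

theorem IsGapCut.isEmpty [Finite V] [Finite H] (hΓ : Γ.IsAcyclic)
    (hσ : IsHeapLabelling Γ σ) (hA : IsGapCut A) : IsEmpty H := by
  refine ⟨fun x => ?_⟩
  by_cases hx : x ∈ A
  · exact Set.eq_empty_iff_forall_notMem.mp (hA.eq_empty hΓ hσ) x hx
  · exact Set.eq_empty_iff_forall_notMem.mp (hA.dual.eq_empty hΓ hσ.dual) (toDual x) hx

end GapCut

/-- Let `Γ` be a finite simple graph with no cycles (a forest), `H` a
finite nonempty poset and `σ : H → V(Γ)` a map such that: (a) whenever `x ⋖ x'` in `H`,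
the vertices `σ x` and `σ x'` are adjacent in `Γ`; and (b) whenever `σ x = σ x'` or
`σ x` and `σ x'` are adjacent in `Γ`, the elements `x` and `x'` are comparable in `H`.
Then there exists `x ∈ H` with `1/3 ≤ di(x;H) ≤ 2/3`. -/
theorem stmt0 {V H : Type*} [Fintype V] (Γ : SimpleGraph V) (hΓ : Γ.IsAcyclic)
    [PartialOrder H] [Fintype H] [Nonempty H] (σ : H → V)
    (ha : ∀ x x' : H, x ⋖ x' → Γ.Adj (σ x) (σ x'))
    (hb : ∀ x x' : H, σ x = σ x' ∨ Γ.Adj (σ x) (σ x') → x ≤ x' ∨ x' ≤ x) :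
    ∃ x : H, 1 / 3 ≤ di H x ∧ di H x ≤ 2 / 3 := by
  by_contra hcon
  have hgap (x : H) :
      3 * numLowerSetsMem x < numLowerSets H ∨ 2 * numLowerSets H < 3 * numLowerSetsMem x := by
    have := (one_third_le_di_and_di_le_iff x).not.mp fun hx => hcon ⟨x, hx⟩
    omega
  exact ((isGapCut_of_forall hgap).isEmpty hΓ ⟨ha, hb⟩).false (Classical.arbitrary H)
end

section
/- Let A ⊆ Φ⁺ be an order ideal of the root poset, let w ∈ W^A = {u ∈ W : I(u) ⊆ A}, and let α ∈ A satisfy wα ∈ −Φ⁺. Then ws_α ∈ W^A and α ∉ I(ws_α). Consequently, with C = W^A, the map w ↦ ws_α is an injection from C_α into C ∖ C_α. -/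
open InnerProductSpace

noncomputable section

variable {E : Type*} [NormedAddCommGroup E] [InnerProductSpace ℝ E]

/-- The reflection across the hyperplane orthogonal to `α`:
`s_α(x) = x − (2⟨α,x⟩/⟨α,α⟩)α`. -/
def sRefl (α x : E) : E := x - (2 * ⟪α, x⟫_ℝ / ⟪α, α⟫_ℝ) • α

/-- `Φ` is a finite crystallographic (reduced) root system spanning `E`. -/
def IsRootSystem (Φ : Set E) : Prop :=
  Φ.Finite ∧ (0 : E) ∉ Φ ∧ Submodule.span ℝ Φ = ⊤ ∧
    (∀ α ∈ Φ, ∀ β ∈ Φ, sRefl α β ∈ Φ) ∧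
    (∀ α ∈ Φ, ∀ β ∈ Φ, ∃ n : ℤ, 2 * ⟪α, β⟫_ℝ / ⟪α, α⟫_ℝ = (n : ℝ)) ∧
    (∀ α ∈ Φ, ∀ t : ℝ, t • α ∈ Φ → t = 1 ∨ t = -1)

/-- `b` is a base of the root system `Φ`: a basis of `E` consisting of roots such that
every root is a linear combination of the base whose coefficients are either all
nonnegative integers or all nonpositive integers. -/
def IsBase (Φ : Set E) {r : ℕ} (b : Module.Basis (Fin r) ℝ E) : Prop :=
  (∀ i, b i ∈ Φ) ∧
    ∀ α ∈ Φ, (∀ i, ∃ k : ℕ, b.repr α i = (k : ℝ)) ∨ (∀ i, ∃ k : ℕ, b.repr α i = -(k : ℝ))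

/-- The positive roots with respect to the base `b`. -/
def posRoots (Φ : Set E) {r : ℕ} (b : Module.Basis (Fin r) ℝ E) : Set E :=
  {α ∈ Φ | ∀ i, 0 ≤ b.repr α i}

/-- The root poset order: `α ≤ β` iff `β − α` is a nonnegative combination of simple roots. -/
def rootLE {r : ℕ} (b : Module.Basis (Fin r) ℝ E) (α β : E) : Prop :=
  ∀ i, 0 ≤ b.repr (β - α) i

/-- `A` is an order ideal of the root poset. -/
def IsRootIdeal (Φ : Set E) {r : ℕ} (b : Module.Basis (Fin r) ℝ E) (A : Set E) : Prop :=
  A ⊆ posRoots Φ b ∧ ∀ α ∈ posRoots Φ b, ∀ β ∈ A, rootLE b α β → α ∈ A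

/-- The Weyl group of `Φ`: the subgroup of linear automorphisms of `E` generated by the
reflections `s_α`, `α ∈ Φ`. -/
def weylGroup (Φ : Set E) : Subgroup (E ≃ₗ[ℝ] E) :=
  Subgroup.closure {g | ∃ α ∈ Φ, ∀ x, g x = sRefl α x}

/-- The inversion set `I(w) = {α ∈ Φ⁺ : wα ∈ −Φ⁺}`. -/
def invSet (Φ : Set E) {r : ℕ} (b : Module.Basis (Fin r) ℝ E) (w : E ≃ₗ[ℝ] E) : Set E :=
  {α ∈ posRoots Φ b | -(w α) ∈ posRoots Φ b}

/-- The convex subset `W_D^A = {w ∈ W : D ⊆ I(w) ⊆ A}` of the Weyl group. -/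
def convexSubset (Φ : Set E) {r : ℕ} (b : Module.Basis (Fin r) ℝ E) (D A : Set E) :
    Set (E ≃ₗ[ℝ] E) :=
  {w | w ∈ weylGroup Φ ∧ D ⊆ invSet Φ b w ∧ invSet Φ b w ⊆ A}

/-- `δ_C(α) = |C_α|/|C|` where `C_α = {w ∈ C : wα ∈ −Φ⁺}`. -/
def delta (Φ : Set E) {r : ℕ} (b : Module.Basis (Fin r) ℝ E) (C : Set (E ≃ₗ[ℝ] E)) (α : E) : ℝ :=
  ({w ∈ C | -(w α) ∈ posRoots Φ b}.ncard : ℝ) / (C.ncard : ℝ)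

end

section RootSystem

variable {E : Type*} [NormedAddCommGroup E] [InnerProductSpace ℝ E]

lemma sRefl_self {α : E} (hα : α ≠ 0) : sRefl α α = -α := by
  have h : ⟪α, α⟫_ℝ ≠ 0 := inner_self_ne_zero.mpr hα
  rw [sRefl, show 2 * ⟪α, α⟫_ℝ / ⟪α, α⟫_ℝ = 2 by field_simp]
  module

lemma sRefl_sRefl (α x : E) : sRefl α (sRefl α x) = x := by
  by_cases hα : α = 0
  · simp [sRefl, hα]
  have h : ⟪α, α⟫_ℝ ≠ 0 := inner_self_ne_zero.mpr hα
  rw [sRefl, sRefl, inner_sub_right, real_inner_smul_right,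
    show 2 * (⟪α, x⟫_ℝ - 2 * ⟪α, x⟫_ℝ / ⟪α, α⟫_ℝ * ⟪α, α⟫_ℝ) / ⟪α, α⟫_ℝ
      = -(2 * ⟪α, x⟫_ℝ / ⟪α, α⟫_ℝ) by field_simp; ring]
  module

lemma neg_mem_of_sRefl_mem {Φ : Set E} (h0 : (0 : E) ∉ Φ)
    (hrefl : ∀ α ∈ Φ, ∀ β ∈ Φ, sRefl α β ∈ Φ) {x : E} (hx : x ∈ Φ) : -x ∈ Φ := by
  simpa [sRefl_self (ne_of_mem_of_not_mem hx h0)] using hrefl x hx x hx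

open Pointwise in
lemma weylGroup_le_stabilizer {Φ : Set E} (hrefl : ∀ α ∈ Φ, ∀ β ∈ Φ, sRefl α β ∈ Φ) :
    weylGroup Φ ≤ MulAction.stabilizer (E ≃ₗ[ℝ] E) Φ := by
  refine Subgroup.closure_le _ |>.mpr ?_
  rintro g ⟨α, hα, hg⟩
  have hmaps : Set.MapsTo g Φ Φ := fun x hx => hg x ▸ hrefl α hα x hx
  have hinv : Function.Involutive g := fun x => by rw [hg, hg, sRefl_sRefl]
  rw [SetLike.mem_coe, MulAction.mem_stabilizer_iff, ← Set.image_smul]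
  exact hmaps.image_subset.antisymm fun x hx => ⟨g x, hmaps hx, hinv x⟩

open Pointwise in
lemma apply_mem_of_mem_weylGroup {Φ : Set E} (hrefl : ∀ α ∈ Φ, ∀ β ∈ Φ, sRefl α β ∈ Φ)
    {w : E ≃ₗ[ℝ] E} (hw : w ∈ weylGroup Φ) {x : E} (hx : x ∈ Φ) : w x ∈ Φ := by
  have hwΦ : w • Φ = Φ := weylGroup_le_stabilizer hrefl hw
  exact hwΦ ▸ Set.smul_mem_smul_set hx

lemma neg_notMem_posRoots {Φ : Set E} (h0 : (0 : E) ∉ Φ) {r : ℕ}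
    {b : Module.Basis (Fin r) ℝ E} {x : E} (hx : x ∈ posRoots Φ b) : -x ∉ posRoots Φ b := by
  intro hnx
  have hrepr : b.repr x = 0 := by
    ext i
    have := hnx.2 i
    simp only [map_neg, Finsupp.coe_neg, Pi.neg_apply] at this
    simpa using le_antisymm (by linarith) (hx.2 i)
  exact h0 (b.repr.map_eq_zero_iff.mp hrepr ▸ hx.1)

/-- Writing `s_α β = β - kα`: if `k ≥ 0` then `wβ = w(s_α β) + k wα` is negative, so
`β ∈ I(w)`; if `k < 0` then `s_α β ≥ β` is a positive root in `I(w)`, and `A` is an ideal. -/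
lemma invSet_mul_sRefl_subset {Φ : Set E} (h0 : (0 : E) ∉ Φ)
    (hrefl : ∀ α ∈ Φ, ∀ β ∈ Φ, sRefl α β ∈ Φ) {r : ℕ} {b : Module.Basis (Fin r) ℝ E}
    {A : Set E} (hA : IsRootIdeal Φ b A) {α : E} (hα : α ∈ posRoots Φ b)
    {s : E ≃ₗ[ℝ] E} (hs : ∀ x, s x = sRefl α x) {w : E ≃ₗ[ℝ] E} (hw : w ∈ weylGroup Φ)
    (hwA : invSet Φ b w ⊆ A) (hwα : -(w α) ∈ posRoots Φ b) :
    invSet Φ b (w * s) ⊆ A := by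
  rintro β ⟨hβ, hwsβ⟩
  set k : ℝ := 2 * ⟪α, β⟫_ℝ / ⟪α, α⟫_ℝ
  have hsβ : s β = β - k • α := hs β
  change -(w (s β)) ∈ posRoots Φ b at hwsβ
  rcases le_or_gt 0 k with hk | hk
  · refine hwA ⟨hβ, neg_mem_of_sRefl_mem h0 hrefl (apply_mem_of_mem_weylGroup hrefl hw hβ.1),
      fun i => ?_⟩
    have hwβ : -(w β) = -(w (s β)) + k • -(w α) := by
      rw [hsβ, map_sub, map_smul]; module
    rw [hwβ, map_add, map_smul, Finsupp.add_apply, Finsupp.smul_apply, smul_eq_mul]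
    exact add_nonneg (hwsβ.2 i) (mul_nonneg hk (hwα.2 i))
  · have hsβ_pos : s β ∈ posRoots Φ b := by
      refine ⟨hs β ▸ hrefl α hα.1 β hβ.1, fun i => ?_⟩
      rw [hsβ, map_sub, map_smul, Finsupp.sub_apply, Finsupp.smul_apply, smul_eq_mul]
      nlinarith [hβ.2 i, hα.2 i]
    refine hA.2 β hβ (s β) (hwA ⟨hsβ_pos, hwsβ⟩) fun i => ?_
    rw [hsβ, show β - k • α - β = (-k) • α by module, map_smul, Finsupp.smul_apply,
      smul_eq_mul]
    exact mul_nonneg (by linarith) (hα.2 i)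

lemma neg_mul_sRefl_apply_notMem_posRoots {Φ : Set E} (h0 : (0 : E) ∉ Φ) {r : ℕ}
    {b : Module.Basis (Fin r) ℝ E} {α : E} (hα : α ≠ 0) {s : E ≃ₗ[ℝ] E}
    (hs : ∀ x, s x = sRefl α x) {w : E ≃ₗ[ℝ] E} (hwα : -(w α) ∈ posRoots Φ b) :
    -((w * s) α) ∉ posRoots Φ b := by
  have hwsα : -((w * s) α) = -(-(w α)) := by
    rw [LinearEquiv.mul_apply, hs, sRefl_self hα, map_neg]
  exact hwsα ▸ neg_notMem_posRoots h0 hwα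

end RootSystem

theorem stmt5_general {E : Type*} [NormedAddCommGroup E] [InnerProductSpace ℝ E]
    (Φ : Set E) (hΦ : IsRootSystem Φ) {r : ℕ} (b : Module.Basis (Fin r) ℝ E)
    (A : Set E) (hA : IsRootIdeal Φ b A) (α : E) (hα : α ∈ A)
    (s : E ≃ₗ[ℝ] E) (hs : ∀ x, s x = sRefl α x) :
    (∀ w ∈ convexSubset Φ b ∅ A, -(w α) ∈ posRoots Φ b →
        w * s ∈ convexSubset Φ b ∅ A ∧ α ∉ invSet Φ b (w * s)) ∧
      Set.InjOn (fun w => w * s)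
        {w ∈ convexSubset Φ b ∅ A | -(w α) ∈ posRoots Φ b} ∧
      (fun w => w * s) '' {w ∈ convexSubset Φ b ∅ A | -(w α) ∈ posRoots Φ b} ⊆
        convexSubset Φ b ∅ A \ {w ∈ convexSubset Φ b ∅ A | -(w α) ∈ posRoots Φ b} := by
  obtain ⟨-, h0, -, hrefl, -⟩ := hΦ
  have hαpos : α ∈ posRoots Φ b := hA.1 hα
  have hα0 : α ≠ 0 := ne_of_mem_of_not_mem hαpos.1 h0
  have hsW : s ∈ weylGroup Φ := Subgroup.subset_closure ⟨α, hαpos.1, hs⟩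
  have hflip : ∀ w, -(w α) ∈ posRoots Φ b → -((w * s) α) ∉ posRoots Φ b :=
    fun w hwα => neg_mul_sRefl_apply_notMem_posRoots h0 hα0 hs hwα
  have hmain : ∀ w ∈ convexSubset Φ b ∅ A, -(w α) ∈ posRoots Φ b →
      w * s ∈ convexSubset Φ b ∅ A ∧ α ∉ invSet Φ b (w * s) :=
    fun w ⟨hw, _, hwA⟩ hwα =>
      ⟨⟨mul_mem hw hsW, Set.empty_subset _,
          invSet_mul_sRefl_subset h0 hrefl hA hαpos hs hw hwA hwα⟩,
        fun h => hflip w hwα h.2⟩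
  refine ⟨hmain, fun u _ v _ huv => mul_right_cancel huv, ?_⟩
  rintro _ ⟨w, ⟨hw, hwα⟩, rfl⟩
  exact ⟨(hmain w hw hwα).1, fun h => hflip w hwα h.2⟩

/-- Let `A ⊆ Φ⁺` be an order ideal of the root poset, let
`w ∈ W^A = {u ∈ W : I(u) ⊆ A}`, and let `α ∈ A` satisfy `wα ∈ −Φ⁺`.  Then `ws_α ∈ W^A` and
`α ∉ I(ws_α)`.  Consequently, with `C = W^A`, the map `w ↦ ws_α` is an injection from
`C_α` into `C ∖ C_α`. -/
theorem stmt5 {E : Type*} [NormedAddCommGroup E] [InnerProductSpace ℝ E]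
    (Φ : Set E) (hΦ : IsRootSystem Φ) {r : ℕ} (b : Module.Basis (Fin r) ℝ E) (hb : IsBase Φ b)
    (A : Set E) (hA : IsRootIdeal Φ b A) (α : E) (hα : α ∈ A)
    (s : E ≃ₗ[ℝ] E) (hs : ∀ x, s x = sRefl α x) :
    (∀ w ∈ convexSubset Φ b ∅ A, -(w α) ∈ posRoots Φ b →
        w * s ∈ convexSubset Φ b ∅ A ∧ α ∉ invSet Φ b (w * s)) ∧
      Set.InjOn (fun w => w * s)
        {w ∈ convexSubset Φ b ∅ A | -(w α) ∈ posRoots Φ b} ∧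
      (fun w => w * s) '' {w ∈ convexSubset Φ b ∅ A | -(w α) ∈ posRoots Φ b} ⊆
        convexSubset Φ b ∅ A \ {w ∈ convexSubset Φ b ∅ A | -(w α) ∈ posRoots Φ b} :=
  stmt5_general Φ hΦ b A hA α hα s hs
end

section
/- Let n ≥ 1 and let Q ⊆ ℝ × ℝⁿ be a compact convex set. For λ ∈ ℝ let S_λ = {y ∈ ℝⁿ : (λ,y) ∈ Q} and f(λ) = Vol_n(S_λ)^{1/n}, where Vol_n is n-dimensional Lebesgue measure. Then f is concave on the (convex) set {λ ∈ ℝ : S_λ ≠ ∅}. -/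
/-!
Convexity of `Q` gives `a • S_x + b • S_y ⊆ S_{ax+by}`, so concavity of `λ ↦ vol(S_λ)^{1/n}` is
the Brunn–Minkowski inequality `vol(A)^{1/n} + vol(B)^{1/n} ≤ vol(A + B)^{1/n}` for nonempty
compact sets, together with `vol(c • A)^{1/n} = c vol(A)^{1/n}` for `c ≥ 0`.

Brunn–Minkowski follows by rescaling from its multiplicative form
`vol(A)^a vol(B)^b ≤ vol(a • A + b • B)` (`a + b = 1`), which is proved by induction on the
dimension: by the induction hypothesis, the slice volumes of `A`, `B` and `a • A + b • B` in
`ℝ × E` satisfy the hypothesis of the one-dimensional Prékopa–Leindler inequality, and by Fubini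
its conclusion is the multiplicative inequality in `ℝ × E`. Prékopa–Leindler itself reduces, after normalising both functions to have
supremum `1`, to the one-dimensional inequality `vol X + vol Y ≤ vol (X + Y)` applied to their
level sets.
-/

open MeasureTheory Set Pointwise
open scoped ENNReal

theorem ENNReal.rpow_mul_rpow_le_add {x y : ℝ≥0∞} {a b : ℝ} (ha : 0 < a) (hb : 0 < b)
    (hab : a + b = 1) : x ^ a * y ^ b ≤ ENNReal.ofReal a * x + ENNReal.ofReal b * y := by
  rcases eq_or_ne x ⊤ with rfl | hx
  · simp [ENNReal.mul_top, ha]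
  rcases eq_or_ne y ⊤ with rfl | hy
  · simp [ENNReal.mul_top, hb]
  lift x to NNReal using hx
  lift y to NNReal using hy
  lift a to NNReal using ha.le
  lift b to NNReal using hb.le
  have := NNReal.geom_mean_le_arith_mean2_weighted a b x y (mod_cast hab)
  rw [← ENNReal.coe_rpow_of_nonneg _ a.coe_nonneg, ← ENNReal.coe_rpow_of_nonneg _ b.coe_nonneg,
    ENNReal.ofReal_coe_nnreal, ENNReal.ofReal_coe_nnreal]
  exact_mod_cast this

theorem ENNReal.min_le_rpow_mul_rpow (x y : ℝ≥0∞) {a b : ℝ} (ha : 0 ≤ a) (hb : 0 ≤ b)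
    (hab : a + b = 1) : min x y ≤ x ^ a * y ^ b :=
  calc min x y = min x y ^ a * min x y ^ b := by
        rw [← ENNReal.rpow_add_of_nonneg _ _ ha hb, hab, ENNReal.rpow_one]
    _ ≤ x ^ a * y ^ b := by gcongr <;> simp

theorem MeasureTheory.lintegral_div_const {α : Type*} [MeasurableSpace α] {μ : Measure α}
    {f : α → ℝ≥0∞} (hf : Measurable f) (c : ℝ≥0∞) :
    ∫⁻ x, f x / c ∂μ = (∫⁻ x, f x ∂μ) / c := by
  simp_rw [div_eq_mul_inv]
  exact lintegral_mul_const _ hf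

theorem MeasureTheory.lintegral_eq_lintegral_meas_ofReal_lt {α : Type*} [MeasurableSpace α]
    (μ : Measure α) {f : α → ℝ≥0∞} (hf : Measurable f) (hf_top : ∀ x, f x ≠ ⊤) :
    ∫⁻ x, f x ∂μ = ∫⁻ t in Ioi 0, μ {x | ENNReal.ofReal t < f x} :=
  calc ∫⁻ x, f x ∂μ = ∫⁻ x, ENNReal.ofReal (f x).toReal ∂μ :=
        lintegral_congr fun x => (ENNReal.ofReal_toReal (hf_top x)).symm
    _ = ∫⁻ t in Ioi 0, μ {x | t < (f x).toReal} :=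
        lintegral_eq_lintegral_meas_lt μ (.of_forall fun _ => ENNReal.toReal_nonneg)
          hf.ennreal_toReal.aemeasurable
    _ = ∫⁻ t in Ioi 0, μ {x | ENNReal.ofReal t < f x} :=
        setLIntegral_congr_fun measurableSet_Ioi fun t ht => by
          simp_rw [ENNReal.ofReal_lt_iff_lt_toReal (le_of_lt ht) (hf_top _)]

theorem MeasureTheory.measure_le_measure_add_left {G : Type*} [AddGroup G] [MeasurableSpace G]
    [MeasurableAdd G] (μ : Measure G) [μ.IsAddLeftInvariant] {A : Set G} (hA : A.Nonempty)
    (B : Set G) : μ B ≤ μ (A + B) :=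
  let ⟨x, hx⟩ := hA
  (measure_vadd μ x B).symm.le.trans (measure_mono (vadd_set_subset_add hx))

theorem Real.volume_add_volume_le_volume_add_of_isCompact {K L : Set ℝ} (hK : IsCompact K)
    (hL : IsCompact L) (hK₀ : K.Nonempty) (hL₀ : L.Nonempty) :
    volume K + volume L ≤ volume (K + L) := by
  have hM := hK.sSup_mem hK₀
  have hm := hL.sInf_mem hL₀
  -- the translates `K + inf L` and `sup K + L` of `K` and `L` overlap in at most one point
  have hinter : (sInf L +ᵥ K) ∩ (sSup K +ᵥ L) ⊆ {sSup K + sInf L} := by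
    rintro _ ⟨⟨k, hk, rfl⟩, ⟨l, hl, hkl⟩⟩
    have := le_csSup hK.bddAbove hk
    have := csInf_le hL.bddBelow hl
    simp only [vadd_eq_add, mem_singleton_iff] at hkl ⊢
    linarith
  calc volume K + volume L = volume (sInf L +ᵥ K) + volume (sSup K +ᵥ L) := by
        rw [measure_vadd, measure_vadd]
    _ = volume ((sInf L +ᵥ K) ∪ (sSup K +ᵥ L)) := by
        rw [← add_zero (volume (_ ∪ _)), ← measure_union_add_inter _
          ((hL.vadd _).measurableSet), measure_mono_null hinter (measure_singleton _)]
    _ ≤ volume (K + L) := by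
        refine measure_mono (union_subset ?_ (vadd_set_subset_add hM))
        rw [add_comm K]
        exact vadd_set_subset_add hm

theorem Real.volume_add_volume_le_volume_add {X Y : Set ℝ} (hX : MeasurableSet X)
    (hY : MeasurableSet Y) (hX₀ : X.Nonempty) (hY₀ : Y.Nonempty) :
    volume X + volume Y ≤ volume (X + Y) := by
  obtain ⟨x, hx⟩ := hX₀
  obtain ⟨y, hy⟩ := hY₀
  rw [hX.measure_eq_iSup_isCompact, hY.measure_eq_iSup_isCompact]
  simp only [iSup_and']
  refine ENNReal.biSup_add_biSup_le' ⟨∅, empty_subset _, isCompact_empty⟩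
    ⟨∅, empty_subset _, isCompact_empty⟩ fun K ⟨hKX, hK⟩ L ⟨hLY, hL⟩ => ?_
  calc volume K + volume L ≤ volume (insert x K) + volume (insert y L) := by
        gcongr <;> exact subset_insert _ _
    _ ≤ volume (insert x K + insert y L) :=
        volume_add_volume_le_volume_add_of_isCompact (hK.insert x) (hL.insert y)
          (insert_nonempty _ _) (insert_nonempty _ _)
    _ ≤ volume (X + Y) := by gcongr; exacts [insert_subset hx hKX, insert_subset hy hLY]

theorem Real.volume_smul_of_nonneg {c : ℝ} (hc : 0 ≤ c) (X : Set ℝ) :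
    volume (c • X) = ENNReal.ofReal c * volume X := by
  rw [Measure.addHaar_smul_of_nonneg _ hc, Module.finrank_self, pow_one]

theorem lintegral_add_le_of_min_le {f g h : ℝ → ℝ≥0∞} {a b : ℝ} (ha : 0 < a) (hb : 0 < b)
    (hf : Measurable f) (hg : Measurable g) (hh : Measurable h)
    (hf_sup : ⨆ s, f s = 1) (hg_sup : ⨆ t, g t = 1)
    (hfgh : ∀ s t, min (f s) (g t) ≤ h (a * s + b * t)) :
    ENNReal.ofReal a * (∫⁻ s, f s) + ENNReal.ofReal b * ∫⁻ t, g t ≤ ∫⁻ u, h u := by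
  have hf_le (s) : f s ≤ 1 := hf_sup ▸ le_iSup f s
  have hg_le (t) : g t ≤ 1 := hg_sup ▸ le_iSup g t
  -- the truncation `h₁` is finite, so the layer-cake formula applies to it
  set h₁ := fun u => min (h u) 1
  have level (r : ℝ) : ENNReal.ofReal a * volume {s | ENNReal.ofReal r < f s} +
      ENNReal.ofReal b * volume {t | ENNReal.ofReal r < g t} ≤
      volume {u | ENNReal.ofReal r < h₁ u} := by
    by_cases hr : ENNReal.ofReal r < 1
    · obtain ⟨s₀, hs₀⟩ := lt_iSup_iff.1 (hr.trans_eq hf_sup.symm)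
      obtain ⟨t₀, ht₀⟩ := lt_iSup_iff.1 (hr.trans_eq hg_sup.symm)
      rw [← Real.volume_smul_of_nonneg ha.le, ← Real.volume_smul_of_nonneg hb.le]
      refine (Real.volume_add_volume_le_volume_add
        ((measurableSet_lt measurable_const hf).const_smul_of_ne_zero ha.ne')
        ((measurableSet_lt measurable_const hg).const_smul_of_ne_zero hb.ne')
        ⟨a • s₀, smul_mem_smul_set hs₀⟩ ⟨b • t₀, smul_mem_smul_set ht₀⟩).trans
        (measure_mono ?_)
      rintro _ ⟨_, ⟨s, hs, rfl⟩, _, ⟨t, ht, rfl⟩, rfl⟩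
      exact lt_min ((lt_min hs ht).trans_le (hfgh s t)) hr
    · have hX : {s | ENNReal.ofReal r < f s} = ∅ :=
        eq_empty_of_forall_notMem fun s hs => hr (hs.trans_le (hf_le s))
      have hY : {t | ENNReal.ofReal r < g t} = ∅ :=
        eq_empty_of_forall_notMem fun t ht => hr (ht.trans_le (hg_le t))
      simp [hX, hY]
  have measurable_level {φ : ℝ → ℝ≥0∞} :
      Measurable fun r : ℝ => volume {x | ENNReal.ofReal r < φ x} :=
    Antitone.measurable fun r₁ r₂ h₁₂ =>
      measure_mono fun x hx => (ENNReal.ofReal_le_ofReal h₁₂).trans_lt hx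
  calc ENNReal.ofReal a * (∫⁻ s, f s) + ENNReal.ofReal b * ∫⁻ t, g t
      = ∫⁻ r in Ioi 0, (ENNReal.ofReal a * volume {s | ENNReal.ofReal r < f s} +
          ENNReal.ofReal b * volume {t | ENNReal.ofReal r < g t}) := by
        rw [lintegral_eq_lintegral_meas_ofReal_lt volume hf
            fun s => ne_top_of_le_ne_top ENNReal.one_ne_top (hf_le s),
          lintegral_eq_lintegral_meas_ofReal_lt volume hg
            fun t => ne_top_of_le_ne_top ENNReal.one_ne_top (hg_le t),
          lintegral_add_left (measurable_level.const_mul _),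
          lintegral_const_mul _ measurable_level, lintegral_const_mul _ measurable_level]
    _ ≤ ∫⁻ r in Ioi 0, volume {u | ENNReal.ofReal r < h₁ u} := lintegral_mono level
    _ = ∫⁻ u, h₁ u := (lintegral_eq_lintegral_meas_ofReal_lt _ (hh.min measurable_const)
          fun u => ne_top_of_le_ne_top ENNReal.one_ne_top (min_le_right _ _)).symm
    _ ≤ ∫⁻ u, h u := lintegral_mono fun u => min_le_left _ _

theorem lintegral_rpow_mul_lintegral_rpow_le {f g h : ℝ → ℝ≥0∞} {a b : ℝ} (ha : 0 < a)
    (hb : 0 < b) (hab : a + b = 1) (hf : Measurable f) (hg : Measurable g) (hh : Measurable h)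
    (hf_bdd : ⨆ s, f s ≠ ⊤) (hg_bdd : ⨆ t, g t ≠ ⊤)
    (hfgh : ∀ s t, f s ^ a * g t ^ b ≤ h (a * s + b * t)) :
    (∫⁻ s, f s) ^ a * (∫⁻ t, g t) ^ b ≤ ∫⁻ u, h u := by
  set M := ⨆ s, f s
  set N := ⨆ t, g t
  rcases eq_or_ne M 0 with hM | hM
  · simp [ENNReal.iSup_eq_zero.1 hM, ENNReal.zero_rpow_of_pos ha]
  rcases eq_or_ne N 0 with hN | hN
  · simp [ENNReal.iSup_eq_zero.1 hN, ENNReal.zero_rpow_of_pos hb]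
  set c := M ^ a * N ^ b
  have hc : c ≠ 0 := mul_ne_zero (ENNReal.rpow_pos hM.bot_lt hf_bdd).ne'
    (ENNReal.rpow_pos hN.bot_lt hg_bdd).ne'
  have hc_top : c ≠ ⊤ := ENNReal.mul_ne_top (ENNReal.rpow_ne_top_of_nonneg ha.le hf_bdd)
    (ENNReal.rpow_ne_top_of_nonneg hb.le hg_bdd)
  have hdiv (x y : ℝ≥0∞) : (x / M) ^ a * (y / N) ^ b = x ^ a * y ^ b / c := by
    rw [ENNReal.div_rpow_of_nonneg _ _ ha.le, ENNReal.div_rpow_of_nonneg _ _ hb.le,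
      ENNReal.mul_div_mul_comm (.inr (ENNReal.rpow_ne_top_of_nonneg hb.le hg_bdd))
      (.inl (ENNReal.rpow_ne_top_of_nonneg ha.le hf_bdd))]
  have key := lintegral_add_le_of_min_le ha hb (hf.div_const M) (hg.div_const N)
    (hh.div_const c) (by rw [← ENNReal.iSup_div, ENNReal.div_self hM hf_bdd])
    (by rw [← ENNReal.iSup_div, ENNReal.div_self hN hg_bdd]) fun s t =>
      calc min (f s / M) (g t / N) ≤ (f s / M) ^ a * (g t / N) ^ b :=
            ENNReal.min_le_rpow_mul_rpow _ _ ha.le hb.le hab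
        _ ≤ h (a * s + b * t) / c := by rw [hdiv]; gcongr; exact hfgh s t
  rw [lintegral_div_const hf, lintegral_div_const hg, lintegral_div_const hh] at key
  calc (∫⁻ s, f s) ^ a * (∫⁻ t, g t) ^ b
      = ((∫⁻ s, f s) / M) ^ a * ((∫⁻ t, g t) / N) ^ b * c := by
        rw [hdiv, ENNReal.div_mul_cancel hc hc_top]
    _ ≤ (ENNReal.ofReal a * ((∫⁻ s, f s) / M) + ENNReal.ofReal b * ((∫⁻ t, g t) / N)) * c := by
        gcongr
        exact ENNReal.rpow_mul_rpow_le_add ha hb hab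
    _ ≤ (∫⁻ u, h u) / c * c := by gcongr
    _ = ∫⁻ u, h u := ENNReal.div_mul_cancel hc hc_top

theorem IsCompact.preimage_prodMk_left {X Y : Type*} [TopologicalSpace X] [TopologicalSpace Y]
    [T2Space X] [T2Space Y] {K : Set (X × Y)} (hK : IsCompact K) (x : X) :
    IsCompact (Prod.mk x ⁻¹' K) :=
  (hK.image continuous_snd).of_isClosed_subset (hK.isClosed.preimage (.prodMk_right x))
    fun _ hy => ⟨_, hy, rfl⟩

theorem smul_preimage_prodMk_add_smul_preimage_prodMk_subset {E : Type*} [AddCommMonoid E]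
    [Module ℝ E] (A B : Set (ℝ × E)) (a b s t : ℝ) :
    a • (Prod.mk s ⁻¹' A) + b • (Prod.mk t ⁻¹' B) ⊆
      Prod.mk (a * s + b * t) ⁻¹' (a • A + b • B) := by
  rintro _ ⟨_, ⟨y, hy, rfl⟩, _, ⟨z, hz, rfl⟩, rfl⟩
  have := add_mem_add (smul_mem_smul_set (a := a) (show (s, y) ∈ A from hy))
    (smul_mem_smul_set (a := b) (show (t, z) ∈ B from hz))
  simpa using this

section Multiplicative

variable {E : Type*} [NormedAddCommGroup E] [NormedSpace ℝ E] [MeasureSpace E] {a b : ℝ}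

theorem volume_rpow_mul_volume_rpow_le_prod [BorelSpace E] [SFinite (volume : Measure E)]
    [IsFiniteMeasureOnCompacts (volume : Measure E)] (ha : 0 < a) (hb : 0 < b) (hab : a + b = 1)
    (hE : ∀ A B : Set E, IsCompact A → IsCompact B →
      volume A ^ a * volume B ^ b ≤ volume (a • A + b • B))
    {A B : Set (ℝ × E)} (hA : IsCompact A) (hB : IsCompact B) :
    volume A ^ a * volume B ^ b ≤ volume (a • A + b • B) := by
  have lintegral_slice {C : Set (ℝ × E)} (hC : IsCompact C) :
      ∫⁻ s, volume (Prod.mk s ⁻¹' C) = volume C := by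
    rw [Measure.volume_eq_prod, Measure.prod_apply hC.measurableSet]
  have iSup_slice_ne_top {C : Set (ℝ × E)} (hC : IsCompact C) :
      ⨆ s, volume (Prod.mk s ⁻¹' C) ≠ ⊤ :=
    ne_top_of_le_ne_top (hC.image continuous_snd).measure_lt_top.ne
      (iSup_le fun s => measure_mono fun y hy => ⟨_, hy, rfl⟩)
  have hC := (hA.smul a).add (hB.smul b)
  rw [← lintegral_slice hA, ← lintegral_slice hB, ← lintegral_slice hC]
  exact lintegral_rpow_mul_lintegral_rpow_le ha hb hab
    (measurable_measure_prodMk_left hA.measurableSet)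
    (measurable_measure_prodMk_left hB.measurableSet)
    (measurable_measure_prodMk_left hC.measurableSet)
    (iSup_slice_ne_top hA) (iSup_slice_ne_top hB) fun s t =>
      (hE _ _ (hA.preimage_prodMk_left s) (hB.preimage_prodMk_left t)).trans
        (measure_mono (smul_preimage_prodMk_add_smul_preimage_prodMk_subset A B a b s t))

theorem ContinuousLinearEquiv.volume_rpow_mul_volume_rpow_le {F : Type*} [NormedAddCommGroup F]
    [NormedSpace ℝ F] [MeasureSpace F] [BorelSpace F] (L : E ≃L[ℝ] F)
    (hL : MeasurePreserving L) (hE : ∀ A B : Set E, IsCompact A → IsCompact B →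
      volume A ^ a * volume B ^ b ≤ volume (a • A + b • B))
    {A B : Set F} (hA : IsCompact A) (hB : IsCompact B) :
    volume A ^ a * volume B ^ b ≤ volume (a • A + b • B) := by
  have hvol {C : Set F} (hC : IsCompact C) : volume (L ⁻¹' C) = volume C :=
    hL.measure_preimage hC.measurableSet.nullMeasurableSet
  have hpre : L ⁻¹' (a • A + b • B) = a • L ⁻¹' A + b • L ⁻¹' B := by
    simp only [← ContinuousLinearEquiv.image_symm_eq_preimage, image_add, image_smul_set]
  rw [← hvol hA, ← hvol hB, ← hvol ((hA.smul a).add (hB.smul b)), hpre]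
  exact hE _ _ (L.toHomeomorph.isCompact_preimage.2 hA) (L.toHomeomorph.isCompact_preimage.2 hB)

end Multiplicative

theorem volume_preserving_finConsEquivL (n : ℕ) :
    MeasurePreserving (Fin.consEquivL ℝ fun _ : Fin (n + 1) => ℝ) := by
  convert (volume_preserving_piFinSuccAbove (fun _ : Fin (n + 1) => ℝ) 0).symm
  ext
  simp [Fin.consEquivL, Fin.consLinearEquiv]

theorem volume_rpow_mul_volume_rpow_le {a b : ℝ} (ha : 0 < a) (hb : 0 < b) (hab : a + b = 1)
    {n : ℕ} {A B : Set (Fin n → ℝ)} (hA : IsCompact A) (hB : IsCompact B) :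
    volume A ^ a * volume B ^ b ≤ volume (a • A + b • B) := by
  induction n with
  | zero =>
    rcases A.eq_empty_or_nonempty with rfl | hA₀
    · simp [ENNReal.zero_rpow_of_pos ha]
    rcases B.eq_empty_or_nonempty with rfl | hB₀
    · simp [ENNReal.zero_rpow_of_pos hb]
    rw [(hA₀.smul_set.add hB₀.smul_set).eq_univ, hA₀.eq_univ, hB₀.eq_univ,
      ← ENNReal.rpow_add_of_nonneg _ _ ha.le hb.le, hab, ENNReal.rpow_one]
  | succ n ih =>
    exact (Fin.consEquivL ℝ fun _ => ℝ).volume_rpow_mul_volume_rpow_le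
      (volume_preserving_finConsEquivL n)
      (fun _ _ => volume_rpow_mul_volume_rpow_le_prod ha hb hab fun _ _ => ih) hA hB

section BrunnMinkowski

variable {n : ℕ}

theorem toReal_volume_smul_rpow (hn : n ≠ 0) {c : ℝ} (hc : 0 ≤ c) (S : Set (Fin n → ℝ)) :
    (volume (c • S)).toReal ^ (1 / (n : ℝ)) = c * (volume S).toReal ^ (1 / (n : ℝ)) := by
  rw [Measure.addHaar_smul_of_nonneg _ hc, Module.finrank_fin_fun, ENNReal.toReal_mul,
    ENNReal.toReal_ofReal (by positivity), Real.mul_rpow (by positivity) ENNReal.toReal_nonneg,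
    one_div, Real.pow_rpow_inv_natCast hc hn]

theorem toReal_volume_rpow_mul_rpow_le {a b : ℝ} (ha : 0 < a) (hb : 0 < b) (hab : a + b = 1)
    {A B : Set (Fin n → ℝ)} (hA : IsCompact A) (hB : IsCompact B) :
    ((volume A).toReal ^ (1 / (n : ℝ))) ^ a * ((volume B).toReal ^ (1 / (n : ℝ))) ^ b ≤
      (volume (a • A + b • B)).toReal ^ (1 / (n : ℝ)) := by
  have h := ENNReal.toReal_mono ((hA.smul a).add (hB.smul b)).measure_lt_top.ne
    (volume_rpow_mul_volume_rpow_le ha hb hab hA hB)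
  rw [ENNReal.toReal_mul, ← ENNReal.toReal_rpow, ← ENNReal.toReal_rpow] at h
  rw [← Real.rpow_mul ENNReal.toReal_nonneg, ← Real.rpow_mul ENNReal.toReal_nonneg,
    mul_comm _ a, mul_comm _ b, Real.rpow_mul ENNReal.toReal_nonneg,
    Real.rpow_mul ENNReal.toReal_nonneg, ← Real.mul_rpow (by positivity) (by positivity)]
  gcongr

theorem toReal_volume_rpow_add_le_of_pos (hn : n ≠ 0) {A B : Set (Fin n → ℝ)}
    (hA : IsCompact A) (hB : IsCompact B) (hA₀ : 0 < (volume A).toReal ^ (1 / (n : ℝ)))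
    (hB₀ : 0 < (volume B).toReal ^ (1 / (n : ℝ))) :
    (volume A).toReal ^ (1 / (n : ℝ)) + (volume B).toReal ^ (1 / (n : ℝ)) ≤
      (volume (A + B)).toReal ^ (1 / (n : ℝ)) := by
  set α := (volume A).toReal ^ (1 / (n : ℝ))
  set β := (volume B).toReal ^ (1 / (n : ℝ))
  -- `α⁻¹ • A` and `β⁻¹ • B` have unit volume, and their combination with weights
  -- `α : β` is `(α + β)⁻¹ • (A + B)`
  have hunit {S : Set (Fin n → ℝ)} {c : ℝ} (hc : 0 < c)
      (hS : (volume S).toReal ^ (1 / (n : ℝ)) = c) :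
      (volume (c⁻¹ • S)).toReal ^ (1 / (n : ℝ)) = 1 := by
    rw [toReal_volume_smul_rpow hn (inv_nonneg.2 hc.le), hS, inv_mul_cancel₀ hc.ne']
  have hweights : α / (α + β) + β / (α + β) = 1 := by field_simp
  have hcomb : (α / (α + β)) • α⁻¹ • A + (β / (α + β)) • β⁻¹ • B = (α + β)⁻¹ • (A + B) := by
    rw [smul_smul, smul_smul, smul_add]
    congr 2 <;> field_simp
  have key := toReal_volume_rpow_mul_rpow_le (by positivity) (by positivity) hweights
    (hA.smul α⁻¹) (hB.smul β⁻¹)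
  rw [hunit hA₀ rfl, hunit hB₀ rfl, Real.one_rpow, Real.one_rpow, one_mul, hcomb,
    toReal_volume_smul_rpow hn (by positivity)] at key
  rwa [le_inv_mul_iff₀ (by positivity), mul_one] at key

theorem toReal_volume_rpow_add_le (hn : n ≠ 0) {A B : Set (Fin n → ℝ)} (hA : IsCompact A)
    (hB : IsCompact B) (hA₀ : A.Nonempty) (hB₀ : B.Nonempty) :
    (volume A).toReal ^ (1 / (n : ℝ)) + (volume B).toReal ^ (1 / (n : ℝ)) ≤
      (volume (A + B)).toReal ^ (1 / (n : ℝ)) := by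
  have hAB : volume (A + B) ≠ ⊤ := (hA.add hB).measure_lt_top.ne
  rcases (by positivity : 0 ≤ (volume A).toReal ^ (1 / (n : ℝ))).eq_or_lt with hα | hα
  · rw [← hα, zero_add]
    exact Real.rpow_le_rpow ENNReal.toReal_nonneg
      (ENNReal.toReal_mono hAB (measure_le_measure_add_left volume hA₀ B)) (by positivity)
  rcases (by positivity : 0 ≤ (volume B).toReal ^ (1 / (n : ℝ))).eq_or_lt with hβ | hβ
  · rw [← hβ, add_zero]
    exact Real.rpow_le_rpow ENNReal.toReal_nonneg
      (ENNReal.toReal_mono hAB (add_comm B A ▸ measure_le_measure_add_left volume hB₀ A))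
      (by positivity)
  exact toReal_volume_rpow_add_le_of_pos hn hA hB hα hβ

end BrunnMinkowski

/-- Let `n ≥ 1` and let `Q ⊆ ℝ × ℝⁿ` be a compact convex set.  For
`λ ∈ ℝ` let `S_λ = {y : (λ,y) ∈ Q}` and `f(λ) = Vol_n(S_λ)^{1/n}`.  Then `f` is concave
on the set `{λ : S_λ ≠ ∅}`. -/
theorem stmt8 (n : ℕ) (hn : 1 ≤ n) (Q : Set (ℝ × (Fin n → ℝ)))
    (hQcompact : IsCompact Q) (hQconvex : Convex ℝ Q) :
    ConcaveOn ℝ {l : ℝ | {y : Fin n → ℝ | (l, y) ∈ Q}.Nonempty}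
      (fun l : ℝ => (volume {y : Fin n → ℝ | (l, y) ∈ Q}).toReal ^ (1 / (n : ℝ))) := by
  have hn₀ : n ≠ 0 := by omega
  refine ⟨?_, fun x hx y hy a b ha hb hab => ?_⟩
  · have hdom : {l : ℝ | {y : Fin n → ℝ | (l, y) ∈ Q}.Nonempty} = Prod.fst '' Q := by
      ext l
      simp [Set.Nonempty]
    exact hdom ▸ hQconvex.linear_image (LinearMap.fst ℝ ℝ (Fin n → ℝ))
  change a * (volume (Prod.mk x ⁻¹' Q)).toReal ^ (1 / (n : ℝ)) +
      b * (volume (Prod.mk y ⁻¹' Q)).toReal ^ (1 / (n : ℝ)) ≤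
    (volume (Prod.mk (a * x + b * y) ⁻¹' Q)).toReal ^ (1 / (n : ℝ))
  rw [← toReal_volume_smul_rpow hn₀ ha, ← toReal_volume_smul_rpow hn₀ hb]
  refine (toReal_volume_rpow_add_le hn₀ ((hQcompact.preimage_prodMk_left x).smul a)
    ((hQcompact.preimage_prodMk_left y).smul b) hx.smul_set hy.smul_set).trans ?_
  exact Real.rpow_le_rpow ENNReal.toReal_nonneg
    (ENNReal.toReal_mono (hQcompact.preimage_prodMk_left _).measure_lt_top.ne
      (measure_mono ((smul_preimage_prodMk_add_smul_preimage_prodMk_subset Q Q a b x y).trans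
        (preimage_mono (hQconvex.set_combo_subset ha hb hab))))) (by positivity)
end

section
/- Let C = W_D^A for some D ⊆ A ⊆ Φ⁺, with C nonempty. Then the union of alcoves ⋃_{w∈C} Q_w equals the polyhedron {x ∈ E : ⟨x,α⟩ ≤ 0 for all α ∈ D, ⟨x,β⟩ ≥ 0 for all β ∈ Φ⁺∖A, and ⟨x,w⁻¹ξ⟩ ≤ 1 for all w ∈ C}. In particular, the generalized order polytope O(C) = ⋃_{w∈C} Q_w is a convex polytope. -/
/-!
Start from any `w ∈ W_D^A` and a point `x` of the polyhedron. While `w x` is negative on some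
simple root `α_i`, replace `w` by `s_i w`: this stays in `W_D^A`, since the only inversion that
changes is `w⁻¹ α_i` and the inequalities for `D` and `Φ⁺ ∖ A` fix the sign of `x` on it, and it
strictly decreases the number of positive roots on which `w x` is negative. So some `w ∈ W_D^A`
makes `w x` dominant, and then `⟪w x, ξ⟫ = ⟪x, w⁻¹ ξ⟫ ≤ 1` puts `w x` in the fundamental alcove.
Conversely, every root is at most `1` on the fundamental alcove, because on the dominant chamber
the highest root dominates all roots; this gives the inequalities on each `Q_w`. Convexity
follows, the polyhedron being an intersection of half-spaces.
-/

open InnerProductSpace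

/-- The fundamental alcove `Q_id = {x : ⟨x,α⟩ ≥ 0 ∀α ∈ Φ⁺, ⟨x,ξ⟩ ≤ 1}`. -/
def fundAlcove {E : Type*} [NormedAddCommGroup E] [InnerProductSpace ℝ E]
    (Φ : Set E) {r : ℕ} (b : Module.Basis (Fin r) ℝ E) (ξ : E) : Set E :=
  {x | (∀ α ∈ posRoots Φ b, 0 ≤ ⟪x, α⟫_ℝ) ∧ ⟪x, ξ⟫_ℝ ≤ 1}

section

variable {E : Type*} [NormedAddCommGroup E] [InnerProductSpace ℝ E]

lemma inner_sRefl_sRefl (α x y : E) : ⟪sRefl α x, sRefl α y⟫_ℝ = ⟪x, y⟫_ℝ := by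
  rcases eq_or_ne α 0 with rfl | hα
  · simp [sRefl]
  have hαα : ⟪α, α⟫_ℝ ≠ 0 := inner_self_ne_zero.mpr hα
  simp only [sRefl, inner_sub_left, inner_sub_right, real_inner_smul_left, real_inner_smul_right,
    real_inner_comm α x]
  field_simp
  ring

lemma inner_sRefl_left (α x y : E) : ⟪sRefl α x, y⟫_ℝ = ⟪x, sRefl α y⟫_ℝ := by
  conv_lhs => rw [← sRefl_sRefl α y]
  exact inner_sRefl_sRefl α x (sRefl α y)

lemma sRefl_add (α x y : E) : sRefl α (x + y) = sRefl α x + sRefl α y := by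
  simp only [sRefl, inner_add_right, mul_add, add_div, add_smul]
  abel

lemma sRefl_smul (α : E) (c : ℝ) (x : E) : sRefl α (c • x) = c • sRefl α x := by
  simp only [sRefl, real_inner_smul_right, smul_sub, smul_smul]
  ring_nf

noncomputable def reflEquiv (α : E) : E ≃ₗ[ℝ] E where
  toFun := sRefl α
  invFun := sRefl α
  left_inv := sRefl_sRefl α
  right_inv := sRefl_sRefl α
  map_add' := sRefl_add α
  map_smul' := sRefl_smul α

lemma repr_sRefl_basis_of_ne {r : ℕ} (b : Module.Basis (Fin r) ℝ E) {i j : Fin r} (hji : j ≠ i)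
    (γ : E) : b.repr (sRefl (b i) γ) j = b.repr γ j := by
  simp [sRefl, hji.symm]

lemma weylGroup_induction {Φ : Set E} {p : (E ≃ₗ[ℝ] E) → Prop}
    (refl : ∀ α ∈ Φ, ∀ g : E ≃ₗ[ℝ] E, (∀ x, g x = sRefl α x) → p g) (one : p 1)
    (mul : ∀ u v, p u → p v → p (u * v)) {w : E ≃ₗ[ℝ] E} (hw : w ∈ weylGroup Φ) : p w := by
  induction hw using Subgroup.closure_induction'' with
  | mem g hg =>
    obtain ⟨α, hα, hgα⟩ := hg
    exact refl α hα g hgα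
  | inv_mem g hg =>
    obtain ⟨α, hα, hgα⟩ := hg
    exact refl α hα g⁻¹ fun x => g.symm_apply_eq.mpr (by rw [hgα, sRefl_sRefl])
  | one => exact one
  | mul u v _ _ hu hv => exact mul u v hu hv

lemma inner_map_map_of_mem_weylGroup {Φ : Set E} {w : E ≃ₗ[ℝ] E} (hw : w ∈ weylGroup Φ)
    (x y : E) : ⟪w x, w y⟫_ℝ = ⟪x, y⟫_ℝ := by
  refine weylGroup_induction (p := fun w => ∀ x y, ⟪w x, w y⟫_ℝ = ⟪x, y⟫_ℝ)
    (fun α _ g hg x y => ?_) (fun _ _ => rfl)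
    (fun u v hu hv x y => (hu (v x) (v y)).trans (hv x y)) hw x y
  rw [hg, hg, inner_sRefl_sRefl]

lemma inner_map_eq_inner_symm_of_mem_weylGroup {Φ : Set E} {w : E ≃ₗ[ℝ] E}
    (hw : w ∈ weylGroup Φ) (x y : E) : ⟪w x, y⟫_ℝ = ⟪x, w.symm y⟫_ℝ := by
  rw [← inner_map_map_of_mem_weylGroup hw x (w.symm y), w.apply_symm_apply]

lemma map_mem_of_mem_weylGroup {Φ : Set E} (hΦ : IsRootSystem Φ) {w : E ≃ₗ[ℝ] E}
    (hw : w ∈ weylGroup Φ) {γ : E} (hγ : γ ∈ Φ) : w γ ∈ Φ :=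
  weylGroup_induction (p := fun w => ∀ γ ∈ Φ, w γ ∈ Φ)
    (fun α hα _ hg γ hγ => hg γ ▸ hΦ.2.2.2.1 α hα γ hγ) (fun _ hγ => hγ)
    (fun _ _ hu hv γ hγ => hu _ (hv γ hγ)) hw γ hγ

lemma symm_apply_mem_of_mem_weylGroup {Φ : Set E} (hΦ : IsRootSystem Φ) {w : E ≃ₗ[ℝ] E}
    (hw : w ∈ weylGroup Φ) {γ : E} (hγ : γ ∈ Φ) : w.symm γ ∈ Φ :=
  map_mem_of_mem_weylGroup hΦ (inv_mem hw) hγ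

section Roots

variable {Φ : Set E} {r : ℕ} {b : Module.Basis (Fin r) ℝ E}

lemma IsRootSystem.ne_zero (hΦ : IsRootSystem Φ) {γ : E} (hγ : γ ∈ Φ) : γ ≠ 0 :=
  fun h => hΦ.2.1 (h ▸ hγ)

lemma IsBase.basis_mem_posRoots (hb : IsBase Φ b) (i : Fin r) : b i ∈ posRoots Φ b :=
  ⟨hb.1 i, fun j => by rw [b.repr_self, Finsupp.single_apply]; positivity⟩

lemma neg_notMem_posRoots_s11 (hΦ : IsRootSystem Φ) {γ : E} (hγ : γ ∈ posRoots Φ b) :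
    -γ ∉ posRoots Φ b := fun hγ' =>
  hΦ.ne_zero hγ.1 <| b.ext_elem_iff.mpr fun i => by
    have := hγ'.2 i
    simp only [map_neg, Finsupp.neg_apply] at this
    simpa using le_antisymm (neg_nonneg.mp this) (hγ.2 i)

lemma mem_posRoots_of_repr_pos (hb : IsBase Φ b) {γ : E} (hγ : γ ∈ Φ) {j : Fin r}
    (hj : 0 < b.repr γ j) : γ ∈ posRoots Φ b := by
  refine ⟨hγ, fun i => ?_⟩
  rcases hb.2 γ hγ with h | h
  · obtain ⟨k, hk⟩ := h i
    exact hk ▸ k.cast_nonneg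
  · obtain ⟨k, hk⟩ := h j
    have := k.cast_nonneg (α := ℝ)
    linarith

lemma mem_posRoots_or_neg_mem_posRoots (hΦ : IsRootSystem Φ) (hb : IsBase Φ b) {γ : E}
    (hγ : γ ∈ Φ) : γ ∈ posRoots Φ b ∨ -γ ∈ posRoots Φ b := by
  rcases hb.2 γ hγ with h | h
  · exact Or.inl ⟨hγ, fun i => by obtain ⟨k, hk⟩ := h i; exact hk ▸ k.cast_nonneg⟩
  · refine Or.inr ⟨(sRefl_self (hΦ.ne_zero hγ)) ▸ hΦ.2.2.2.1 γ hγ γ hγ, fun i => ?_⟩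
    obtain ⟨k, hk⟩ := h i
    simp [hk]

lemma inner_nonneg_of_repr_nonneg {y v : E} (hy : ∀ i, 0 ≤ ⟪y, b i⟫_ℝ)
    (hv : ∀ i, 0 ≤ b.repr v i) : 0 ≤ ⟪y, v⟫_ℝ := by
  rw [← b.sum_repr v, inner_sum]
  exact Finset.sum_nonneg fun i _ => by
    rw [real_inner_smul_right]
    exact mul_nonneg (hv i) (hy i)

lemma exists_inner_basis_neg {y β : E} (hβ : β ∈ posRoots Φ b) (hneg : ⟪y, β⟫_ℝ < 0) :
    ∃ i, ⟪y, b i⟫_ℝ < 0 := by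
  by_contra! h
  exact (inner_nonneg_of_repr_nonneg h hβ.2).not_gt hneg

/-- A positive root other than `b i` has a positive coefficient outside `i`: otherwise it is a
multiple of `b i`, and the only such roots are `± b i`. -/
lemma exists_repr_pos_of_ne_basis (hΦ : IsRootSystem Φ) (hb : IsBase Φ b) {γ : E}
    (hγ : γ ∈ posRoots Φ b) {i : Fin r} (hne : γ ≠ b i) : ∃ j ≠ i, 0 < b.repr γ j := by
  by_contra! h
  have hγ_eq : γ = b.repr γ i • b i := b.ext_elem_iff.mpr fun j => by
    rcases eq_or_ne j i with rfl | hji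
    · simp
    · simpa [Finsupp.single_apply, hji.symm] using le_antisymm (h j hji) (hγ.2 j)
  rcases hΦ.2.2.2.2.2 (b i) (hb.1 i) _ (hγ_eq ▸ hγ.1) with h1 | h1
  · exact hne (by rw [hγ_eq, h1, one_smul])
  · linarith [hγ.2 i]

lemma sRefl_basis_mem_posRoots (hΦ : IsRootSystem Φ) (hb : IsBase Φ b) (i : Fin r) {γ : E}
    (hγ : γ ∈ posRoots Φ b) (hne : γ ≠ b i) : sRefl (b i) γ ∈ posRoots Φ b := by
  obtain ⟨j, hji, hj⟩ := exists_repr_pos_of_ne_basis hΦ hb hγ hne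
  exact mem_posRoots_of_repr_pos hb (hΦ.2.2.2.1 _ (hb.1 i) γ hγ.1)
    (repr_sRefl_basis_of_ne b hji γ ▸ hj)

lemma inner_le_one_of_mem_fundAlcove (hΦ : IsRootSystem Φ) (hb : IsBase Φ b) {ξ : E}
    (hξmax : ∀ α ∈ posRoots Φ b, rootLE b α ξ) {y γ : E}
    (hy : y ∈ fundAlcove Φ b ξ) (hγ : γ ∈ Φ) : ⟪y, γ⟫_ℝ ≤ 1 := by
  rcases mem_posRoots_or_neg_mem_posRoots hΦ hb hγ with hpos | hneg
  · have := inner_nonneg_of_repr_nonneg (fun i => hy.1 _ (hb.basis_mem_posRoots i))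
      (hξmax γ hpos)
    rw [inner_sub_right] at this
    linarith [hy.2]
  · have := hy.1 _ hneg
    rw [inner_neg_right] at this
    linarith

end Roots

section Descent

variable {Φ : Set E} {r : ℕ} {b : Module.Basis (Fin r) ℝ E}

lemma mem_invSet_reflEquiv_mul (hΦ : IsRootSystem Φ) (hb : IsBase Φ b) (i : Fin r)
    {w : E ≃ₗ[ℝ] E} {α : E} (hα : α ∈ invSet Φ b w) (hne : w α ≠ -b i) :
    α ∈ invSet Φ b (reflEquiv (b i) * w) := by
  refine ⟨hα.1, ?_⟩
  have : reflEquiv (b i) (-w α) ∈ posRoots Φ b :=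
    sRefl_basis_mem_posRoots hΦ hb i hα.2 fun h => hne (neg_eq_iff_eq_neg.mp h)
  rwa [map_neg] at this

lemma mem_invSet_of_mem_invSet_reflEquiv_mul (hΦ : IsRootSystem Φ) (hb : IsBase Φ b) (i : Fin r)
    {w : E ≃ₗ[ℝ] E} (hw : w ∈ weylGroup Φ) {γ : E} (hγ : γ ∈ invSet Φ b (reflEquiv (b i) * w))
    (hne : w γ ≠ b i) : γ ∈ invSet Φ b w := by
  refine ⟨hγ.1, ?_⟩
  refine (mem_posRoots_or_neg_mem_posRoots hΦ hb
    (map_mem_of_mem_weylGroup hΦ hw hγ.1.1)).resolve_left fun hpos => ?_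
  exact neg_notMem_posRoots_s11 hΦ (sRefl_basis_mem_posRoots hΦ hb i hpos hne) hγ.2

lemma reflEquiv_mul_mem_convexSubset (hΦ : IsRootSystem Φ) (hb : IsBase Φ b) {D A : Set E}
    {w : E ≃ₗ[ℝ] E} (hw : w ∈ convexSubset Φ b D A) {x : E} (hxD : ∀ α ∈ D, ⟪x, α⟫_ℝ ≤ 0)
    (hxA : ∀ β ∈ posRoots Φ b \ A, 0 ≤ ⟪x, β⟫_ℝ) {i : Fin r} (hi : ⟪w x, b i⟫_ℝ < 0) :
    reflEquiv (b i) * w ∈ convexSubset Φ b D A := by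
  obtain ⟨hwW, hDw, hwA⟩ := hw
  have hinner : ∀ γ, ⟪x, γ⟫_ℝ = ⟪w x, w γ⟫_ℝ := fun γ =>
    (inner_map_map_of_mem_weylGroup hwW x γ).symm
  refine ⟨mul_mem (Subgroup.subset_closure ⟨b i, hb.1 i, fun _ => rfl⟩) hwW, fun α hα => ?_,
    fun γ hγ => ?_⟩
  · refine mem_invSet_reflEquiv_mul hΦ hb i (hDw hα) fun h => ?_
    have := hxD α hα
    rw [hinner, h, inner_neg_right] at this
    linarith
  · by_cases h : w γ = b i
    · by_contra hγA
      have := hxA γ ⟨hγ.1, hγA⟩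
      rw [hinner, h] at this
      linarith
    · exact hwA (mem_invSet_of_mem_invSet_reflEquiv_mul hΦ hb i hwW hγ h)

def negRoots (Φ : Set E) {r : ℕ} (b : Module.Basis (Fin r) ℝ E) (y : E) : Set E :=
  {β ∈ posRoots Φ b | ⟪y, β⟫_ℝ < 0}

/-- Reflecting `y` in a wall on whose negative side it lies removes `b i` from `negRoots` and
permutes the rest through `sRefl (b i)`. -/
lemma ncard_negRoots_sRefl_lt (hΦ : IsRootSystem Φ) (hb : IsBase Φ b) {y : E} {i : Fin r}
    (hi : ⟪y, b i⟫_ℝ < 0) :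
    (negRoots Φ b (sRefl (b i) y)).ncard < (negRoots Φ b y).ncard := by
  have hbi : b i ≠ 0 := hΦ.ne_zero (hb.1 i)
  have hfin : (negRoots Φ b y).Finite := hΦ.1.subset fun γ hγ => hγ.1.1
  have hsub : negRoots Φ b (sRefl (b i) y) ⊆ sRefl (b i) '' (negRoots Φ b y \ {b i}) := by
    rintro β ⟨hβ, hβneg⟩
    rw [inner_sRefl_left] at hβneg
    have hne : β ≠ b i := by
      rintro rfl
      rw [sRefl_self hbi, inner_neg_right] at hβneg
      linarith
    refine ⟨sRefl (b i) β, ⟨⟨sRefl_basis_mem_posRoots hΦ hb i hβ hne, hβneg⟩, fun h => ?_⟩,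
      sRefl_sRefl _ _⟩
    have hβ_eq : β = -b i := by
      rw [← sRefl_sRefl (b i) β, Set.mem_singleton_iff.mp h, sRefl_self hbi]
    exact neg_notMem_posRoots_s11 hΦ (hb.basis_mem_posRoots i) (hβ_eq ▸ hβ)
  calc (negRoots Φ b (sRefl (b i) y)).ncard
      ≤ (sRefl (b i) '' (negRoots Φ b y \ {b i})).ncard :=
        Set.ncard_le_ncard hsub (hfin.sdiff.image _)
    _ = (negRoots Φ b y \ {b i}).ncard :=
        Set.ncard_image_of_injective _ (Function.Involutive.injective (sRefl_sRefl (b i)))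
    _ < (negRoots Φ b y).ncard :=
        Set.ncard_sdiff_singleton_lt_of_mem ⟨hb.basis_mem_posRoots i, hi⟩ hfin

lemma exists_mem_convexSubset_dominant (hΦ : IsRootSystem Φ) (hb : IsBase Φ b) {D A : Set E}
    (hC : (convexSubset Φ b D A).Nonempty) {x : E} (hxD : ∀ α ∈ D, ⟪x, α⟫_ℝ ≤ 0)
    (hxA : ∀ β ∈ posRoots Φ b \ A, 0 ≤ ⟪x, β⟫_ℝ) :
    ∃ w ∈ convexSubset Φ b D A, ∀ β ∈ posRoots Φ b, 0 ≤ ⟪w x, β⟫_ℝ := by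
  obtain ⟨w, hw, hmin⟩ := exists_minimalFor_of_wellFoundedLT (· ∈ convexSubset Φ b D A)
    (fun w => (negRoots Φ b (w x)).ncard) hC
  refine ⟨w, hw, fun β hβ => ?_⟩
  by_contra! hneg
  obtain ⟨i, hi⟩ := exists_inner_basis_neg hβ hneg
  have hlt := ncard_negRoots_sRefl_lt hΦ hb hi
  exact hlt.not_ge (hmin (reflEquiv_mul_mem_convexSubset hΦ hb hw hxD hxA hi) hlt.le)

end Descent

def alcovePolyhedron (Φ : Set E) {r : ℕ} (b : Module.Basis (Fin r) ℝ E) (ξ : E) (D A : Set E) :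
    Set E :=
  {x | (∀ α ∈ D, ⟪x, α⟫_ℝ ≤ 0) ∧ (∀ β ∈ posRoots Φ b \ A, 0 ≤ ⟪x, β⟫_ℝ) ∧
    ∀ w ∈ convexSubset Φ b D A, ⟪x, w.symm ξ⟫_ℝ ≤ 1}

lemma convex_alcovePolyhedron (Φ : Set E) {r : ℕ} (b : Module.Basis (Fin r) ℝ E) (ξ : E)
    (D A : Set E) : Convex ℝ (alcovePolyhedron Φ b ξ D A) := by
  have hlin : ∀ v : E, IsLinearMap ℝ fun x : E => ⟪x, v⟫_ℝ := fun v =>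
    ⟨fun x y => inner_add_left x y v, fun c x => real_inner_smul_left x v c⟩
  simp only [alcovePolyhedron, Set.ofPred_and, Set.ofPred_forall]
  exact (convex_iInter₂ fun α _ => convex_halfSpace_le (hlin α) 0).inter <|
    (convex_iInter₂ fun β _ => convex_halfSpace_ge (hlin β) 0).inter <|
      convex_iInter₂ fun w _ => convex_halfSpace_le (hlin _) 1

lemma iUnion_preimage_fundAlcove_subset_alcovePolyhedron {Φ : Set E} (hΦ : IsRootSystem Φ)
    {r : ℕ} {b : Module.Basis (Fin r) ℝ E} (hb : IsBase Φ b) {ξ : E} (hξ : ξ ∈ posRoots Φ b)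
    (hξmax : ∀ α ∈ posRoots Φ b, rootLE b α ξ) (D A : Set E) :
    (⋃ w ∈ convexSubset Φ b D A, (⇑w) ⁻¹' fundAlcove Φ b ξ) ⊆ alcovePolyhedron Φ b ξ D A := by
  simp only [Set.iUnion_subset_iff]
  intro w ⟨hwW, hDw, hwA⟩ x hx
  have hinner : ∀ γ, ⟪x, γ⟫_ℝ = ⟪w x, w γ⟫_ℝ := fun γ =>
    (inner_map_map_of_mem_weylGroup hwW x γ).symm
  refine ⟨fun α hα => ?_, fun β hβ => ?_, fun u hu => ?_⟩
  · have := hx.1 _ (hDw hα).2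
    rw [inner_neg_right] at this
    linarith [hinner α]
  · exact hinner β ▸ hx.1 _ ((mem_posRoots_or_neg_mem_posRoots hΦ hb
      (map_mem_of_mem_weylGroup hΦ hwW hβ.1.1)).resolve_right fun h => hβ.2 (hwA ⟨hβ.1, h⟩))
  · exact hinner _ ▸ inner_le_one_of_mem_fundAlcove hΦ hb hξmax hx
      (map_mem_of_mem_weylGroup hΦ hwW (symm_apply_mem_of_mem_weylGroup hΦ hu.1 hξ.1))

lemma alcovePolyhedron_subset_iUnion_preimage_fundAlcove {Φ : Set E} (hΦ : IsRootSystem Φ)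
    {r : ℕ} {b : Module.Basis (Fin r) ℝ E} (hb : IsBase Φ b) (ξ : E) {D A : Set E}
    (hC : (convexSubset Φ b D A).Nonempty) :
    alcovePolyhedron Φ b ξ D A ⊆ ⋃ w ∈ convexSubset Φ b D A, (⇑w) ⁻¹' fundAlcove Φ b ξ := by
  rintro x ⟨hxD, hxA, hxξ⟩
  obtain ⟨w, hw, hdom⟩ := exists_mem_convexSubset_dominant hΦ hb hC hxD hxA
  exact Set.mem_iUnion₂.mpr ⟨w, hw, hdom,
    (inner_map_eq_inner_symm_of_mem_weylGroup hw.1 x ξ).symm ▸ hxξ w hw⟩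

end

theorem stmt11_general {E : Type*} [NormedAddCommGroup E] [InnerProductSpace ℝ E]
    (Φ : Set E) (hΦ : IsRootSystem Φ) {r : ℕ} (b : Module.Basis (Fin r) ℝ E) (hb : IsBase Φ b)
    (ξ : E) (hξ : ξ ∈ posRoots Φ b) (hξmax : ∀ α ∈ posRoots Φ b, rootLE b α ξ)
    (D A : Set E)
    (hCne : (convexSubset Φ b D A).Nonempty) :
    (⋃ w ∈ convexSubset Φ b D A, (⇑w) ⁻¹' fundAlcove Φ b ξ) =
        {x : E | (∀ α ∈ D, ⟪x, α⟫_ℝ ≤ 0) ∧ (∀ β ∈ posRoots Φ b \ A, 0 ≤ ⟪x, β⟫_ℝ) ∧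
          ∀ w ∈ convexSubset Φ b D A, ⟪x, w.symm ξ⟫_ℝ ≤ 1} ∧
      Convex ℝ (⋃ w ∈ convexSubset Φ b D A, (⇑w) ⁻¹' fundAlcove Φ b ξ) := by
  have h : (⋃ w ∈ convexSubset Φ b D A, (⇑w) ⁻¹' fundAlcove Φ b ξ) =
      alcovePolyhedron Φ b ξ D A :=
    (iUnion_preimage_fundAlcove_subset_alcovePolyhedron hΦ hb hξ hξmax D A).antisymm
      (alcovePolyhedron_subset_iUnion_preimage_fundAlcove hΦ hb ξ hCne)
  exact ⟨h, h ▸ convex_alcovePolyhedron Φ b ξ D A⟩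

/-- Let `C = W_D^A` (`D ⊆ A ⊆ Φ⁺`) be nonempty.  Then the union of the
alcoves `Q_w = w⁻¹Q_id`, `w ∈ C`, equals the polyhedron cut out by `⟨x,α⟩ ≤ 0` for `α ∈ D`,
`⟨x,β⟩ ≥ 0` for `β ∈ Φ⁺ ∖ A`, and `⟨x, w⁻¹ξ⟩ ≤ 1` for `w ∈ C`.  In particular the
generalized order polytope `O(C) = ⋃_{w∈C} Q_w` is convex. -/
theorem stmt11 {E : Type*} [NormedAddCommGroup E] [InnerProductSpace ℝ E]
    (Φ : Set E) (hΦ : IsRootSystem Φ) {r : ℕ} (b : Module.Basis (Fin r) ℝ E) (hb : IsBase Φ b)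
    (ξ : E) (hξ : ξ ∈ posRoots Φ b) (hξmax : ∀ α ∈ posRoots Φ b, rootLE b α ξ)
    (D A : Set E) (hD : D ⊆ A) (hA : A ⊆ posRoots Φ b)
    (hCne : (convexSubset Φ b D A).Nonempty) :
    (⋃ w ∈ convexSubset Φ b D A, (⇑w) ⁻¹' fundAlcove Φ b ξ) =
        {x : E | (∀ α ∈ D, ⟪x, α⟫_ℝ ≤ 0) ∧ (∀ β ∈ posRoots Φ b \ A, 0 ≤ ⟪x, β⟫_ℝ) ∧
          ∀ w ∈ convexSubset Φ b D A, ⟪x, w.symm ξ⟫_ℝ ≤ 1} ∧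
      Convex ℝ (⋃ w ∈ convexSubset Φ b D A, (⇑w) ⁻¹' fundAlcove Φ b ξ) :=
  stmt11_general Φ hΦ b hb ξ hξ hξmax D A hCne
end
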